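/- Let (g, d, [·,·]) be a differential graded Lie algebra over a field k of characteristic zero, η : g → g a linear map of degree −1, μₙ the maps of Theorem 3.1, and R a local Artin k-algebra with maximal ideal m. Suppose Γ ∈ (g⊗m)¹ satisfies the L∞ Maurer–Cartan equation Σ_{k≥1} ((−1)^{k(k+1)/2}/k!) μₖ(Γ,…,Γ) = 0. Then the Γ-deformed differential d_Γ defined by d_Γ(v) := −Σ_{k≥1} ((−1)^{k(k+1)/2}/(k−1)!) μₖ(Γ,…,Γ,v) = dv + μ₂(Γ,v) − (1/2!)μ₃(Γ,Γ,v) − (1/3!)μ₄(Γ,Γ,Γ,v) + … satisfies d_Γ ∘ d_Γ = 0 on g⊗m. -/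

import Mathlib

open Finset
open scoped TensorProduct

noncomputable section

/-- The Koszul sign `e(σ; v₁,…,vₙ)` of a permutation `σ` with respect to the (integer)
degrees `deg i` of homogeneous elements, defined by
`v_{σ(1)} ∧ … ∧ v_{σ(n)} = (-1)^σ e(σ) v₁ ∧ … ∧ vₙ`. -/
def koszulSign (k : Type*) [Field k] {n : ℕ} (deg : Fin n → ℤ) (σ : Equiv.Perm (Fin n)) : k :=
  ∏ p ∈ Finset.univ.filter (fun p : Fin n × Fin n => p.1 < p.2 ∧ σ p.2 < σ p.1),
    (-1 : k) ^ (deg (σ p.1) * deg (σ p.2))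

/-- The sign `(-1)^σ` of a permutation, as an element of the field `k`. -/
def permSign (k : Type*) [Field k] {n : ℕ} (σ : Equiv.Perm (Fin n)) : k :=
  ((Equiv.Perm.sign σ : ℤ) : k)

/-- `Sh(p,n)`: the permutations of `{0,…,n-1}` that are strictly increasing on the first `p`
positions and on the remaining `n - p` positions. -/
def shuffles (p n : ℕ) : Finset (Equiv.Perm (Fin n)) :=
  Finset.univ.filter fun σ =>
    (∀ a b : Fin n, (a : ℕ) < (b : ℕ) → (b : ℕ) < p → σ a < σ b) ∧
    (∀ a b : Fin n, (a : ℕ) < (b : ℕ) → p ≤ (a : ℕ) → σ a < σ b)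

/-- A differential graded Lie algebra over `k` on the carrier `V`, presented by its
(internal) ℤ-grading, differential `d` of degree `+1` and bracket of degree `0`,
satisfying graded antisymmetry, the graded Jacobi identity and the graded Leibniz rule. -/
structure GradedDGLA (k V : Type*) [Field k] [AddCommGroup V] [Module k V] where
  grade : ℤ → Submodule k V
  internal : DirectSum.IsInternal grade
  d : V →ₗ[k] V
  bracket : V →ₗ[k] V →ₗ[k] V
  d_grade : ∀ (i : ℤ) (v : V), v ∈ grade i → d v ∈ grade (i + 1)
  bracket_grade : ∀ (i j : ℤ) (x y : V), x ∈ grade i → y ∈ grade j →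
    bracket x y ∈ grade (i + j)
  d_sq : ∀ v : V, d (d v) = 0
  antisymm : ∀ (i j : ℤ) (x y : V), x ∈ grade i → y ∈ grade j →
    bracket x y = -((-1 : k) ^ (i * j) • bracket y x)
  jacobi : ∀ (i j l : ℤ) (x y z : V), x ∈ grade i → y ∈ grade j → z ∈ grade l →
    (-1 : k) ^ (i * l) • bracket (bracket x y) z
      + (-1 : k) ^ (j * i) • bracket (bracket y z) x
      + (-1 : k) ^ (l * j) • bracket (bracket z x) y = 0
  leibniz : ∀ (i : ℤ) (x y : V), x ∈ grade i →
    d (bracket x y) = bracket (d x) y + (-1 : k) ^ i • bracket x (d y)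

/-- The `L∞`-operations `μₙ` of Theorem 3.1, built from a differential `d`, a bracket `br`
and a degree `-1` operator `η`:  `μ₁ = d`, `μ₂ = (dη + ηd)[·,·]`, and for `n ≥ 3`
`μₙ(v₁,…,vₙ) = (-1)ⁿ ∑_{σ ∈ Sh(n-1,n)} (-1)^σ e(σ) η[μ_{n-1}(v_{σ(1)},…,v_{σ(n-1)}), v_{σ(n)}]`.
The arguments are homogeneous of degrees recorded in `deg`. -/
def muRec {k : Type*} [Field k] {W : Type*} [AddCommGroup W] [Module k W]
    (d : W →ₗ[k] W) (br : W →ₗ[k] W →ₗ[k] W) (η : W →ₗ[k] W) :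
    (n : ℕ) → (Fin n → ℤ) → (Fin n → W) → W
  | 0, _, _ => 0
  | 1, _, v => d (v 0)
  | 2, _, v => d (η (br (v 0) (v 1))) + η (d (br (v 0) (v 1)))
  | (n + 3), deg, v =>
      (-1 : k) ^ (n + 3) •
        ∑ σ ∈ shuffles (n + 2) (n + 3),
          (permSign k σ * koszulSign k deg σ) •
            η (br
                (muRec d br η (n + 2) (fun i => deg (σ i.castSucc))
                  (fun i => v (σ i.castSucc)))
                (v (σ (Fin.last (n + 2)))))

/-- The general right-hand side `∑_{k+l=n+1} ∑_{σ ∈ Sh(k,n)} (-1)^{σ + k(l-1)} e(σ)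
F_l(μ_k(v_{σ(1)},…,v_{σ(k)}), v_{σ(k+1)},…,v_{σ(n)})` appearing both in the higher Jacobi
identities (with `F = μ`) and in the `L∞`-morphism equations into an abelian dg Lie algebra. -/
def linfRHS (k : Type*) [Field k] {W : Type*} [AddCommGroup W] [Module k W]
    (μ F : (m : ℕ) → (Fin m → ℤ) → (Fin m → W) → W)
    (n : ℕ) (deg : Fin n → ℤ) (v : Fin n → W) : W :=
  ∑ p : Fin n, ∑ σ ∈ shuffles ((p : ℕ) + 1) n,
    (permSign k σ * (-1 : k) ^ (((p : ℕ) + 1) * (n - 1 - (p : ℕ))) * koszulSign k deg σ) •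
      F (n - (p : ℕ))
        (fun i =>
          if (i : ℕ) = 0 then
            (∑ j : Fin ((p : ℕ) + 1),
              deg (σ ⟨(j : ℕ), by have := j.isLt; have := p.isLt; omega⟩)) + 1 - ((p : ℕ) : ℤ)
          else
            deg (σ ⟨(p : ℕ) + (i : ℕ), by have := i.isLt; have := p.isLt; omega⟩))
        (fun i =>
          if (i : ℕ) = 0 then
            μ ((p : ℕ) + 1)
              (fun j => deg (σ ⟨(j : ℕ), by have := j.isLt; have := p.isLt; omega⟩))
              (fun j => v (σ ⟨(j : ℕ), by have := j.isLt; have := p.isLt; omega⟩))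
          else
            v (σ ⟨(p : ℕ) + (i : ℕ), by have := i.isLt; have := p.isLt; omega⟩))

/-- The `n`-th higher Jacobi expression `Φₙ` of a family `μ` of multilinear operations. -/
def higherJacobi (k : Type*) [Field k] {W : Type*} [AddCommGroup W] [Module k W]
    (μ : (m : ℕ) → (Fin m → ℤ) → (Fin m → W) → W)
    (n : ℕ) (deg : Fin n → ℤ) (v : Fin n → W) : W :=
  linfRHS k μ μ n deg v

/-- The bracket on `V ⊗[k] R` induced by a bracket on `V` and the multiplication of `R`:
`[x ⊗ a, y ⊗ b] = [x,y] ⊗ (a*b)`. -/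
def tensorBracket {k : Type*} [Field k] {V : Type*} [AddCommGroup V] [Module k V]
    {R : Type*} [CommRing R] [Algebra k R] (br : V →ₗ[k] V →ₗ[k] V) :
    (V ⊗[k] R) →ₗ[k] (V ⊗[k] R) →ₗ[k] (V ⊗[k] R) :=
  TensorProduct.curry
    ((TensorProduct.map (TensorProduct.lift br) (LinearMap.mul' k R)).comp
      (TensorProduct.tensorTensorTensorComm k V R V R).toLinearMap)

/-- The homogeneous piece `(g ⊗ m)ⁱ = gⁱ ⊗ m` of `V ⊗[k] R`: the image of `p ⊗ q` in
`V ⊗[k] R`, for a submodule `p ⊆ V` (a graded piece) and a `k`-submodule `q ⊆ R`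
(the maximal ideal). -/
def tensorGrade {k : Type*} [Field k] {V : Type*} [AddCommGroup V] [Module k V]
    {R : Type*} [CommRing R] [Algebra k R] (p : Submodule k V) (q : Submodule k R) :
    Submodule k (V ⊗[k] R) :=
  LinearMap.range (TensorProduct.map p.subtype q.subtype)

/-- The maximal ideal of a local `k`-algebra, viewed as a `k`-submodule. -/
def maxIdealSub (k : Type*) [Field k] (R : Type*) [CommRing R] [Algebra k R]
    [IsLocalRing R] : Submodule k R :=
  Submodule.restrictScalars k (IsLocalRing.maximalIdeal R)

/-- The coefficient `(-1)^{n(n+1)/2} / n!` of the `L∞` Maurer–Cartan equation. -/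
def mcCoeff (k : Type*) [Field k] (n : ℕ) : k :=
  (-1 : k) ^ (n * (n + 1) / 2) / (n.factorial : k)

/-- The `Γ`-deformed differential
`d_Γ(w) = -∑_{n≥1} ((-1)^{n(n+1)/2}/(n-1)!) μₙ(Γ,…,Γ,w)` (sum cut off at `N`, which is
enough as soon as `m^N = 0`), applied to a homogeneous element `w` of degree `j`. -/
def deformedDiff {k : Type*} [Field k] {W : Type*} [AddCommGroup W] [Module k W]
    (d : W →ₗ[k] W) (br : W →ₗ[k] W →ₗ[k] W) (η : W →ₗ[k] W)
    (Γ : W) (N : ℕ) (j : ℤ) (w : W) : W :=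
  -(∑ n ∈ Finset.Icc 1 N,
      ((-1 : k) ^ (n * (n + 1) / 2) / ((n - 1).factorial : k)) •
        muRec d br η n (fun i => if (i : ℕ) = n - 1 then j else 1)
          (fun i => if (i : ℕ) = n - 1 then w else Γ))

/-
For arguments `Γ, …, Γ, x` the recursion defining `μₙ` collapses: a shuffle in `Sh(n-1, n)` is
determined by the slot it gives to the last argument, so `μₙ₊₁(Γ,…,Γ,x)` is a combination of
`η[μₙ(Γ,…,Γ), x]` and `η[μₙ(Γ,…,Γ,x), Γ]` with explicit signs. Summed with the coefficients of
`d_Γ`, the first kind of terms add up to `η[MC(Γ), x] = 0`, which leaves the closed form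
`d_Γ x = dx + dη[Γ,x] - (-1)^|x| η[d_Γ x, Γ]`. Applied to `u = d_Γ x`, together with `d² = 0`,
the Leibniz rule and antisymmetry, it gives `X = (-1)^|x| η[X, Γ]` for `X = d_Γ u`. As `Γ` lies in
`g ⊗ m`, this pushes `X` into `g ⊗ mˢ` for every `s`, hence `X = 0`.
-/

lemma Fin.val_succAbove_eq_val_last_iff {m : ℕ} {t : Fin (m + 2)} (ht : t ≠ Fin.last (m + 1))
    (a : Fin (m + 1)) : ((t.succAbove a : ℕ) = m + 1 ↔ (a : ℕ) = m) := by
  simpa [Fin.ext_iff] using Fin.succAbove_eq_last_iff ht (b := a)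

lemma Finset.sum_Icc_one_eq_sum_range {M : Type*} [AddCommMonoid M] (f : ℕ → M) (N : ℕ) :
    ∑ n ∈ Icc 1 N, f n = ∑ m ∈ range N, f (m + 1) := by
  rw [range_eq_Ico, sum_Ico_add', ← Ico_add_one_right_eq_Icc, zero_add]

section Shuffles

variable {m : ℕ}

/-- The shuffle in `Sh(m, m+1)` that puts the last argument into slot `t`. -/
def lastShuffle (t : Fin (m + 1)) : Equiv.Perm (Fin (m + 1)) :=
  (finRotate (m + 1)).trans (Fin.cycleRange t).symm

@[simp]
lemma lastShuffle_castSucc (t : Fin (m + 1)) (i : Fin m) :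
    lastShuffle t i.castSucc = t.succAbove i := by
  simp [lastShuffle, Fin.coeSucc_eq_succ]

@[simp]
lemma lastShuffle_last (t : Fin (m + 1)) : lastShuffle t (Fin.last m) = t := by
  simp [lastShuffle]

@[simp]
lemma lastShuffle_last_eq_one : lastShuffle (Fin.last m) = 1 := by
  rw [lastShuffle, Fin.cycleRange_last]
  exact Equiv.self_trans_symm _

lemma lastShuffle_injective : Function.Injective (lastShuffle (m := m)) := fun a b h => by
  simpa using congrArg (· (Fin.last m)) h

lemma sign_lastShuffle (t : Fin (m + 1)) :
    Equiv.Perm.sign (lastShuffle t) = (-1) ^ (m + (t : ℕ)) := by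
  rw [show lastShuffle t = (Fin.cycleRange t).symm * finRotate (m + 1) from rfl,
    Equiv.Perm.sign_mul, Equiv.Perm.sign_symm, Fin.sign_cycleRange, sign_finRotate,
    pow_add, mul_comm, Nat.add_sub_cancel]

lemma shuffles_eq_image_lastShuffle : shuffles m (m + 1) = univ.image lastShuffle := by
  ext σ
  simp only [shuffles, mem_filter, mem_univ, true_and, mem_image]
  constructor
  · rintro ⟨hσ, -⟩
    refine ⟨σ (Fin.last m), Equiv.ext fun a => ?_⟩
    set t := σ (Fin.last m)
    have hmem : ∀ i : Fin m, σ i.castSucc ∈ univ.erase t := fun i =>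
      mem_erase.2 ⟨fun h => (Fin.castSucc_lt_last i).ne (σ.injective h), mem_univ _⟩
    have hcard : (univ.erase t).card = m := by simp
    have hmono : StrictMono fun i : Fin m => σ i.castSucc := fun a b hab =>
      hσ a.castSucc b.castSucc (Fin.castSucc_lt_castSucc_iff.2 hab) b.isLt
    -- both `σ ∘ castSucc` and `t.succAbove` enumerate the complement of `t` increasingly
    have key : ∀ i : Fin m, σ i.castSucc = t.succAbove i := fun i => by
      rw [show σ i.castSucc = (fun i : Fin m => σ i.castSucc) i from rfl,
        orderEmbOfFin_unique hcard hmem hmono,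
        ← orderEmbOfFin_unique hcard (fun i => mem_erase.2 ⟨Fin.succAbove_ne t i, mem_univ _⟩)
          (Fin.strictMono_succAbove t)]
    induction a using Fin.lastCases with
    | last => rw [lastShuffle_last]
    | cast i => rw [lastShuffle_castSucc, key]
  · rintro ⟨t, rfl⟩
    refine ⟨fun a b hab hb => ?_, fun a b hab ha => absurd b.isLt (by omega)⟩
    obtain ⟨a', rfl⟩ : ∃ a' : Fin m, a = a'.castSucc := ⟨⟨a, hab.trans hb⟩, rfl⟩
    obtain ⟨b', rfl⟩ : ∃ b' : Fin m, b = b'.castSucc := ⟨⟨b, hb⟩, rfl⟩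
    rw [lastShuffle_castSucc, lastShuffle_castSucc]
    exact Fin.strictMono_succAbove t (Fin.mk_lt_mk.2 hab)

end Shuffles

section Padding

variable {W : Type*} (Γ : W)

def degLast (n : ℕ) (i : ℤ) : Fin n → ℤ := fun t => if (t : ℕ) = n - 1 then i else 1

def argsLast (x : W) (n : ℕ) : Fin n → W := fun t => if (t : ℕ) = n - 1 then x else Γ

lemma degLast_one (n : ℕ) : degLast n 1 = fun _ => 1 := by
  funext _; exact ite_self _

lemma argsLast_self (n : ℕ) : argsLast Γ Γ n = fun _ => Γ := by
  funext _; exact ite_self _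

end Padding

section Signs

variable {m : ℕ} (k : Type*) [Field k]

lemma inversions_lastShuffle (t : Fin (m + 1)) :
    univ.filter (fun p : Fin (m + 1) × Fin (m + 1) =>
        p.1 < p.2 ∧ lastShuffle t p.2 < lastShuffle t p.1)
      = (univ.filter fun a : Fin m => t ≤ a.castSucc).image fun a => (a.castSucc, Fin.last m) := by
  ext ⟨p, q⟩
  induction q using Fin.lastCases with
  | last =>
    induction p using Fin.lastCases with
    | last => simp
    | cast a => simp [Fin.lt_succAbove_iff_le_castSucc]
  | cast b =>
    induction p using Fin.lastCases with
    | last => simp [(Fin.castSucc_lt_last b).not_gt]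
    | cast a =>
      simp only [mem_filter, mem_univ, true_and, mem_image, Prod.mk.injEq,
        lastShuffle_castSucc, Fin.castSucc_lt_castSucc_iff]
      refine iff_of_false (fun h => (Fin.strictMono_succAbove t h.1).not_gt h.2) ?_
      rintro ⟨_, -, -, h⟩
      exact (Fin.castSucc_lt_last b).ne' h

lemma koszulSign_lastShuffle (deg : Fin (m + 1) → ℤ) (t : Fin (m + 1)) :
    koszulSign k deg (lastShuffle t)
      = ∏ a ∈ univ.filter (fun a : Fin m => t ≤ a.castSucc),
          (-1 : k) ^ (deg (t.succAbove a) * deg t) := by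
  rw [koszulSign, inversions_lastShuffle, prod_image fun a _ b _ h =>
    Fin.castSucc_injective m (congrArg Prod.fst h)]
  simp

lemma permSign_lastShuffle (t : Fin (m + 1)) :
    permSign k (lastShuffle t) = (-1 : k) ^ (m + (t : ℕ)) := by
  simp [permSign, sign_lastShuffle]

lemma permSign_one : permSign k (1 : Equiv.Perm (Fin m)) = 1 := by
  simp [permSign]

lemma koszulSign_one (deg : Fin m → ℤ) : koszulSign k deg 1 = 1 := by
  refine prod_eq_one fun p hp => ?_
  have := (mem_filter.1 hp).2
  exact absurd this.2 this.1.not_gt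

lemma permSign_mul_koszulSign_degLast (i : ℤ) (s : Fin m) :
    permSign k (lastShuffle s.castSucc) * koszulSign k (degLast (m + 1) i) (lastShuffle s.castSucc)
      = -(-1 : k) ^ i := by
  obtain ⟨m, rfl⟩ : ∃ m', m = m' + 1 := ⟨m - 1, by have := s.isLt; omega⟩
  have hfilter : univ.filter (fun a : Fin (m + 1) => s.castSucc ≤ a.castSucc) = Ici s := by
    ext; simp
  have hterm : ∀ a ∈ Ici s, (-1 : k) ^ (degLast (m + 2) i (s.castSucc.succAbove a)
      * degLast (m + 2) i s.castSucc) = if a = Fin.last m then (-1) ^ i else -1 := by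
    intro a ha
    rw [Fin.succAbove_of_le_castSucc _ _ (Fin.castSucc_le_castSucc_iff.2 (mem_Ici.1 ha))]
    simp only [degLast, Fin.val_succ, Fin.val_castSucc, Fin.ext_iff, Fin.val_last]
    split_ifs <;> first | omega | simp
  rw [permSign_lastShuffle, koszulSign_lastShuffle, hfilter, prod_congr rfl hterm,
    ← mul_prod_erase _ _ (mem_Ici.2 (Fin.le_last s)), if_pos rfl,
    prod_congr rfl fun a ha => if_neg (ne_of_mem_erase ha), prod_const,
    card_erase_of_mem (mem_Ici.2 (Fin.le_last s)), Fin.card_Ici, Fin.val_castSucc]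
  have hexp : m + 1 + (s : ℕ) + (m + 1 - s - 1) = 2 * m + 1 := by omega
  calc (-1 : k) ^ (m + 1 + (s : ℕ)) * ((-1) ^ i * (-1) ^ (m + 1 - s - 1))
      = (-1) ^ (m + 1 + (s : ℕ) + (m + 1 - s - 1)) * (-1) ^ i := by ring
    _ = -(-1) ^ i := by rw [hexp, pow_succ, pow_mul]; norm_num

end Signs

section Coefficients

variable (k : Type*) [Field k]

/-- `d_Γ v = -∑ₙ deformedCoeff k n • μₙ(Γ,…,Γ,v)`. -/
def deformedCoeff (n : ℕ) : k := (-1) ^ (n * (n + 1) / 2) / ((n - 1).factorial : k)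

lemma neg_one_pow_triangle_succ (n : ℕ) :
    (-1 : k) ^ ((n + 1) * (n + 1 + 1) / 2) = (-1) ^ (n + 1) * (-1) ^ (n * (n + 1) / 2) := by
  rw [← pow_add, show (n + 1) * (n + 1 + 1) = n * (n + 1) + 2 * (n + 1) by ring,
    Nat.add_mul_div_left _ _ two_pos, add_comm]

lemma deformedCoeff_mul_neg_one_pow (n : ℕ) :
    deformedCoeff k (n + 3) * (-1) ^ (n + 3) = mcCoeff k (n + 2) := by
  rw [deformedCoeff, mcCoeff, neg_one_pow_triangle_succ k (n + 2), show n + 3 - 1 = n + 2 from rfl,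
    div_mul_eq_mul_div, mul_right_comm, ← pow_add, ← two_mul, pow_mul, neg_one_sq, one_pow,
    one_mul]

lemma deformedCoeff_mul_neg_one_pow_mul [CharZero k] (n : ℕ) :
    deformedCoeff k (n + 3) * (-1) ^ (n + 3) * (n + 2 : ℕ) = deformedCoeff k (n + 2) := by
  have hne : ((n + 2 : ℕ) : k) ≠ 0 := Nat.cast_ne_zero.2 (by omega)
  rw [deformedCoeff_mul_neg_one_pow, mcCoeff, deformedCoeff, show n + 2 - 1 = n + 1 from rfl,
    Nat.factorial_succ (n + 1), Nat.cast_mul, div_mul_eq_mul_div, mul_comm ((n + 1 + 1 : ℕ) : k),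
    mul_div_mul_right _ _ hne]

end Coefficients

section Recursion

variable {k : Type*} [Field k] {W : Type*} [AddCommGroup W] [Module k W]
variable (d : W →ₗ[k] W) (br : W →ₗ[k] W →ₗ[k] W) (η : W →ₗ[k] W) (Γ : W)

/-- `μₙ(Γ,…,Γ,x)` for `x` of degree `i`. -/
def muLast (n : ℕ) (i : ℤ) (x : W) : W := muRec d br η n (degLast n i) (argsLast Γ x n)

lemma muLast_one_self (n : ℕ) :
    muLast d br η Γ n 1 Γ = muRec d br η n (fun _ => 1) (fun _ => Γ) := by
  rw [muLast, degLast_one, argsLast_self]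

lemma muRec_add_three (n : ℕ) (deg : Fin (n + 3) → ℤ) (v : Fin (n + 3) → W) :
    muRec d br η (n + 3) deg v = (-1 : k) ^ (n + 3) •
      ∑ t : Fin (n + 3), (permSign k (lastShuffle t) * koszulSign k deg (lastShuffle t)) •
        η (br (muRec d br η (n + 2) (fun i => deg (t.succAbove i)) (fun i => v (t.succAbove i)))
          (v t)) := by
  rw [muRec, shuffles_eq_image_lastShuffle, sum_image fun a _ b _ h => lastShuffle_injective h]
  simp only [lastShuffle_castSucc, lastShuffle_last]

lemma muLast_one (i : ℤ) (x : W) : muLast d br η Γ 1 i x = d x := rfl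

lemma muLast_two (i : ℤ) (x : W) :
    muLast d br η Γ 2 i x = d (η (br Γ x)) + η (d (br Γ x)) := rfl

lemma muLast_add_three (n : ℕ) (i : ℤ) (x : W) :
    muLast d br η Γ (n + 3) i x = (-1 : k) ^ (n + 3) •
      (η (br (muLast d br η Γ (n + 2) 1 Γ) x)
        + ((n + 2 : ℕ) * -(-1 : k) ^ i) • η (br (muLast d br η Γ (n + 2) i x) Γ)) := by
  rw [muLast, muRec_add_three, Fin.sum_univ_castSucc]
  congr 1
  refine (add_comm _ _).trans ?_
  congr 1
  · simp only [lastShuffle_last_eq_one, permSign_one, koszulSign_one, one_mul, one_smul,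
      Fin.succAbove_last, muLast, degLast_one, argsLast_self]
    simp [degLast, argsLast, Nat.ne_of_lt]
  · have hne : ∀ s : Fin (n + 2), s.castSucc ≠ Fin.last (n + 2) := fun s =>
      (Fin.castSucc_lt_last s).ne
    have hterm : ∀ s : Fin (n + 2),
        (permSign k (lastShuffle s.castSucc) * koszulSign k (degLast (n + 3) i)
            (lastShuffle s.castSucc)) •
          η (br (muRec d br η (n + 2) (fun a => degLast (n + 3) i (s.castSucc.succAbove a))
              (fun a => argsLast Γ x (n + 3) (s.castSucc.succAbove a)))
            (argsLast Γ x (n + 3) s.castSucc))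
          = (-(-1 : k) ^ i) • η (br (muLast d br η Γ (n + 2) i x) Γ) := fun s => by
      have hpred : ∀ a : Fin (n + 2),
          ((s.castSucc.succAbove a : ℕ) = n + 3 - 1 ↔ (a : ℕ) = n + 2 - 1) :=
        Fin.val_succAbove_eq_val_last_iff (hne s)
      have hdeg : (fun a => degLast (n + 3) i (s.castSucc.succAbove a)) = degLast (n + 2) i :=
        funext fun a => by simp only [degLast, hpred]
      have hargs :
          (fun a => argsLast Γ x (n + 3) (s.castSucc.succAbove a)) = argsLast Γ x (n + 2) :=
        funext fun a => by simp only [argsLast, hpred]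
      have hΓ : argsLast Γ x (n + 3) s.castSucc = Γ := if_neg (by simp; omega)
      rw [permSign_mul_koszulSign_degLast, hdeg, hargs, hΓ, muLast]
    rw [sum_congr rfl fun s _ => hterm s, sum_const, card_univ, Fintype.card_fin,
      ← Nat.cast_smul_eq_nsmul k, smul_smul]

lemma deformedCoeff_smul_muLast_add_three [CharZero k] (n : ℕ) (i : ℤ) (x : W) :
    deformedCoeff k (n + 3) • muLast d br η Γ (n + 3) i x
      = mcCoeff k (n + 2) • η (br (muLast d br η Γ (n + 2) 1 Γ) x)
        - (-1 : k) ^ i • η (br (deformedCoeff k (n + 2) • muLast d br η Γ (n + 2) i x) Γ) := by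
  rw [muLast_add_three, ← deformedCoeff_mul_neg_one_pow k n,
    ← deformedCoeff_mul_neg_one_pow_mul k n]
  simp only [map_smul, LinearMap.smul_apply]
  module

end Recursion

section Abstract

variable {k : Type*} [Field k] {W : Type*} [AddCommGroup W] [Module k W]
variable {d : W →ₗ[k] W} {br : W →ₗ[k] W →ₗ[k] W} {η : W →ₗ[k] W} {Γ : W}

structure IsGraded (P : ℤ → Submodule k W) (d : W →ₗ[k] W) (br : W →ₗ[k] W →ₗ[k] W)
    (η : W →ₗ[k] W) : Prop where
  d_mem {i : ℤ} {x : W} : x ∈ P i → d x ∈ P (i + 1)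
  η_mem {i : ℤ} {x : W} : x ∈ P i → η x ∈ P (i - 1)
  br_mem {i j : ℤ} {x y : W} : x ∈ P i → y ∈ P j → br x y ∈ P (i + j)

/-- Modelled on `Q s = g ⊗ mˢ`. -/
structure IsFiltered (Q : ℕ → Submodule k W) (d : W →ₗ[k] W) (br : W →ₗ[k] W →ₗ[k] W)
    (η : W →ₗ[k] W) : Prop where
  zero_eq_top : Q 0 = ⊤
  d_mem {s : ℕ} {x : W} : x ∈ Q s → d x ∈ Q s
  η_mem {s : ℕ} {x : W} : x ∈ Q s → η x ∈ Q s
  br_mem {s t : ℕ} {x y : W} : x ∈ Q s → y ∈ Q t → br x y ∈ Q (s + t)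

variable {P : ℤ → Submodule k W} {Q : ℕ → Submodule k W}

theorem muLast_mem_grade (hP : IsGraded P d br η) (hΓ : Γ ∈ P 1) :
    ∀ (n : ℕ) {i : ℤ} {x : W}, x ∈ P i → muLast d br η Γ n i x ∈ P (i + 1)
  | 0, _, _, _ => zero_mem _
  | 1, _, _, hx => hP.d_mem hx
  | 2, i, x, hx => by
    have h := hP.br_mem hΓ hx
    rw [muLast_two]
    refine add_mem ?_ ?_
    · convert hP.d_mem (hP.η_mem h) using 2; ring
    · convert hP.η_mem (hP.d_mem h) using 2; ring
  | n + 3, i, x, hx => by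
    have hB := hP.br_mem (muLast_mem_grade hP hΓ (n + 2) hΓ) hx
    have hA := hP.br_mem (muLast_mem_grade hP hΓ (n + 2) hx) hΓ
    rw [muLast_add_three]
    refine Submodule.smul_mem _ _ (add_mem ?_ (Submodule.smul_mem _ _ ?_))
    · convert hP.η_mem hB using 2; ring
    · convert hP.η_mem hA using 2; ring

theorem muLast_mem_filtration (hQ : IsFiltered Q d br η) (hΓ : Γ ∈ Q 1) :
    ∀ (n : ℕ) (i : ℤ) {x : W} {s : ℕ}, x ∈ Q s → muLast d br η Γ (n + 1) i x ∈ Q (n + s)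
  | 0, _, _, s, hx => by rw [zero_add]; exact hQ.d_mem hx
  | 1, i, x, s, hx => by
    have h := hQ.br_mem hΓ hx
    rw [muLast_two]
    exact add_mem (hQ.d_mem (hQ.η_mem h)) (hQ.η_mem (hQ.d_mem h))
  | n + 2, i, x, s, hx => by
    have hB := hQ.br_mem (muLast_mem_filtration hQ hΓ (n + 1) 1 hΓ) hx
    have hA := hQ.br_mem (muLast_mem_filtration hQ hΓ (n + 1) i hx) hΓ
    rw [show n + 2 + 1 = n + 3 from rfl, muLast_add_three]
    refine Submodule.smul_mem _ _ (add_mem ?_ (Submodule.smul_mem _ _ ?_))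
    · exact hQ.η_mem hB
    · convert hQ.η_mem hA using 2; ring

lemma deformedDiff_one (i : ℤ) (x : W) : deformedDiff d br η Γ 1 i x = d x := by
  simp [deformedDiff, muRec]

/-- The recursion of `muLast_add_three` extended to `m = 0`, where `μ₂ = (dη + ηd)[·,·]`
contributes the extra term. -/
lemma deformedCoeff_smul_muLast_succ_succ [CharZero k] {i : ℤ} {x : W}
    (hleib : η (d (br Γ x)) = η (br (d Γ) x) - (-1 : k) ^ i • η (br (d x) Γ)) :
    ∀ m : ℕ, deformedCoeff k (m + 2) • muLast d br η Γ (m + 2) i x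
      = (if m = 0 then -d (η (br Γ x)) else 0)
        + η (br (mcCoeff k (m + 1) • muLast d br η Γ (m + 1) 1 Γ) x)
        - (-1 : k) ^ i • η (br (deformedCoeff k (m + 1) • muLast d br η Γ (m + 1) i x) Γ)
  | 0 => by
    rw [if_pos rfl, muLast_two, muLast_one, muLast_one, hleib]
    simp [deformedCoeff, mcCoeff]
    module
  | m + 1 => by
    rw [if_neg m.succ_ne_zero, zero_add, deformedCoeff_smul_muLast_add_three]
    simp only [map_smul, LinearMap.smul_apply]

theorem deformedDiff_eq [CharZero k] (hQ : IsFiltered Q d br η) {N : ℕ} (hQN : Q N = ⊥)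
    (hN : 2 ≤ N) (hΓ : Γ ∈ Q 1)
    (hMC : ∑ n ∈ Icc 1 N, mcCoeff k n • muRec d br η n (fun _ => 1) (fun _ => Γ) = 0)
    {i : ℤ} {x : W} (hleib : η (d (br Γ x)) = η (br (d Γ) x) - (-1 : k) ^ i • η (br (d x) Γ)) :
    deformedDiff d br η Γ N i x
      = d x + d (η (br Γ x)) - (-1 : k) ^ i • η (br (deformedDiff d br η Γ N i x) Γ) := by
  obtain ⟨M, rfl⟩ : ∃ M, N = M + 2 := ⟨N - 2, by omega⟩
  set F : ℕ → W := fun m => deformedCoeff k (m + 1) • muLast d br η Γ (m + 1) i x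
  set G : ℕ → W := fun m => mcCoeff k (m + 1) • muLast d br η Γ (m + 1) 1 Γ
  have hD : deformedDiff d br η Γ (M + 2) i x = -∑ m ∈ range (M + 2), F m := by
    rw [deformedDiff, sum_Icc_one_eq_sum_range]; rfl
  have hG : ∑ m ∈ range (M + 1), G m = 0 := by
    have hGM : G (M + 1) ∈ Q (M + 2) := Submodule.smul_mem _ _ <| by
      simpa using muLast_mem_filtration hQ hΓ (M + 1) 1 hΓ
    rw [sum_Icc_one_eq_sum_range, sum_range_succ] at hMC
    simp only [← muLast_one_self] at hMC
    change ∑ m ∈ range (M + 1), G m + G (M + 1) = 0 at hMC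
    rw [hQN, Submodule.mem_bot] at hGM
    rwa [hGM, add_zero] at hMC
  have hF : η (br (F (M + 1)) Γ) = 0 := by
    have hx : x ∈ Q 0 := hQ.zero_eq_top ▸ Submodule.mem_top
    have := hQ.η_mem (hQ.br_mem (Submodule.smul_mem _ (deformedCoeff k (M + 2))
      (muLast_mem_filtration hQ hΓ (M + 1) i hx)) hΓ)
    rwa [hQN] at this
  have hsum : ∑ m ∈ range (M + 2), F m = -d x - d (η (br Γ x))
      - (-1 : k) ^ i • η (br (∑ m ∈ range (M + 2), F m) Γ) := by
    have hlin : ∀ (z : W) (f : ℕ → W) (s : Finset ℕ),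
        η (br (∑ m ∈ s, f m) z) = ∑ m ∈ s, η (br (f m) z) := by
      intros; simp [map_sum]
    have hF0 : F 0 = -d x := by simp [F, deformedCoeff, muLast_one]
    have hGsum : ∑ m ∈ range (M + 1), η (br (G m) x) = 0 := by
      rw [← hlin, hG, map_zero, LinearMap.zero_apply, map_zero]
    have hFsum : η (br (∑ m ∈ range (M + 2), F m) Γ) = ∑ m ∈ range (M + 1), η (br (F m) Γ) := by
      rw [hlin, sum_range_succ, hF, add_zero]
    rw [hFsum, sum_range_succ',
      sum_congr rfl fun m _ => deformedCoeff_smul_muLast_succ_succ hleib m, sum_sub_distrib,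
      sum_add_distrib, sum_ite_eq' (range (M + 1)) 0, if_pos (by simp),
      ← smul_sum, hF0]
    change _ + ∑ m ∈ range (M + 1), η (br (G m) x)
        - _ • ∑ m ∈ range (M + 1), η (br (F m) Γ) + _ = _
    rw [hGsum]
    abel
  rw [hD]
  conv_lhs => rw [hsum]
  simp only [map_neg, LinearMap.neg_apply, smul_neg]
  abel

lemma eq_zero_of_eq_smul_η_br (hQ : IsFiltered Q d br η) {N : ℕ} (hQN : Q N = ⊥) (hΓ : Γ ∈ Q 1)
    {c : k} {X : W} (hX : X = c • η (br X Γ)) : X = 0 := by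
  have hmem : ∀ s, X ∈ Q s := fun s => by
    induction s with
    | zero => exact hQ.zero_eq_top ▸ Submodule.mem_top
    | succ s ih => rw [hX]; exact Submodule.smul_mem _ _ (hQ.η_mem (hQ.br_mem ih hΓ))
  simpa [hQN] using hmem N

lemma br_comm_of_mem_one
    (hanti : ∀ (i j : ℤ) (x y : W), x ∈ P i → y ∈ P j → br x y = -((-1 : k) ^ (i * j) • br y x))
    (hΓ : Γ ∈ P 1) {i : ℤ} {y : W} (hy : y ∈ P (i + 1)) : br Γ y = (-1 : k) ^ i • br y Γ := by
  rw [hanti 1 (i + 1) Γ y hΓ hy, one_mul, zpow_add_one₀ (by norm_num), mul_neg_one, neg_smul,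
    neg_neg]

theorem deformedDiff_deformedDiff_eq_zero [CharZero k] (hP : IsGraded P d br η)
    (hQ : IsFiltered Q d br η)
    (hdd : ∀ x, d (d x) = 0)
    (hanti : ∀ (i j : ℤ) (x y : W), x ∈ P i → y ∈ P j → br x y = -((-1 : k) ^ (i * j) • br y x))
    (hleib : ∀ (i : ℤ) (x y : W), x ∈ P i → d (br x y) = br (d x) y + (-1 : k) ^ i • br x (d y))
    (hΓP : Γ ∈ P 1) (hΓQ : Γ ∈ Q 1) {N : ℕ} (hQN : Q N = ⊥)
    (hMC : ∑ n ∈ Icc 1 N, mcCoeff k n • muRec d br η n (fun _ => 1) (fun _ => Γ) = 0)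
    {j : ℤ} {x : W} (hx : x ∈ P j) :
    deformedDiff d br η Γ N (j + 1) (deformedDiff d br η Γ N j x) = 0 := by
  obtain rfl | rfl | hN : N = 0 ∨ N = 1 ∨ 2 ≤ N := by omega
  · exact (Submodule.eq_bot_iff _).1 (hQ.zero_eq_top.symm.trans hQN) _ Submodule.mem_top
  · simp only [deformedDiff_one, hdd]
  have hleibΓ : ∀ {i : ℤ} {y : W}, y ∈ P i →
      η (d (br Γ y)) = η (br (d Γ) y) - (-1 : k) ^ i • η (br (d y) Γ) := fun hy => by
    rw [hleib 1 Γ _ hΓP, br_comm_of_mem_one hanti hΓP (hP.d_mem hy)]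
    simp only [map_add, map_neg, map_smul, zpow_one, neg_smul, one_smul, sub_eq_add_neg]
  set u := deformedDiff d br η Γ N j x
  have hu_mem : u ∈ P (j + 1) := neg_mem <| sum_mem fun n _ =>
    Submodule.smul_mem _ _ (muLast_mem_grade hP hΓP n hx)
  have hu : u = d x + d (η (br Γ x)) - (-1 : k) ^ j • η (br u Γ) :=
    deformedDiff_eq hQ hQN hN hΓQ hMC (hleibΓ hx)
  have hdu : d u = -((-1 : k) ^ j • d (η (br u Γ))) := by
    conv_lhs => rw [hu]
    simp [hdd]
  refine eq_zero_of_eq_smul_η_br hQ hQN hΓQ (c := (-1) ^ j) ?_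
  conv_lhs => rw [deformedDiff_eq hQ hQN hN hΓQ hMC (hleibΓ hu_mem)]
  rw [hdu, br_comm_of_mem_one hanti hΓP hu_mem, zpow_add_one₀ (by norm_num)]
  simp only [map_smul]
  module

end Abstract

section Tensor

variable {k V : Type*} [Field k] [AddCommGroup V] [Module k V]
variable {R : Type*} [CommRing R] [Algebra k R]

@[simp]
lemma tensorBracket_tmul (br : V →ₗ[k] V →ₗ[k] V) (a b : V) (r s : R) :
    tensorBracket br (a ⊗ₜ[k] r) (b ⊗ₜ[k] s) = br a b ⊗ₜ[k] (r * s) := by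
  simp [tensorBracket]

lemma tmul_mem_tensorGrade {p : Submodule k V} {q : Submodule k R} {a : V} {r : R}
    (ha : a ∈ p) (hr : r ∈ q) : a ⊗ₜ[k] r ∈ tensorGrade p q :=
  ⟨(⟨a, ha⟩ : p) ⊗ₜ (⟨r, hr⟩ : q), rfl⟩

@[elab_as_elim]
lemma tensorGrade_induction {p : Submodule k V} {q : Submodule k R}
    {motive : V ⊗[k] R → Prop} {x : V ⊗[k] R} (hx : x ∈ tensorGrade p q)
    (zero : motive 0) (tmul : ∀ a ∈ p, ∀ r ∈ q, motive (a ⊗ₜ[k] r))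
    (add : ∀ y z, motive y → motive z → motive (y + z)) : motive x := by
  obtain ⟨z, rfl⟩ := hx
  induction z using TensorProduct.induction_on with
  | zero => simpa using zero
  | tmul a r => exact tmul a a.2 r r.2
  | add y z hy hz => rw [map_add]; exact add _ _ hy hz

lemma tensorGrade_mono {p p' : Submodule k V} {q q' : Submodule k R} (hp : p ≤ p') (hq : q ≤ q') :
    tensorGrade p q ≤ tensorGrade p' q' := fun _ hx =>
  tensorGrade_induction hx (zero_mem _) (fun _ ha _ hr => tmul_mem_tensorGrade (hp ha) (hq hr))
    fun _ _ => add_mem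

lemma rTensor_mem_tensorGrade {f : V →ₗ[k] V} {p p' : Submodule k V} {q : Submodule k R}
    (hf : ∀ a ∈ p, f a ∈ p') {x : V ⊗[k] R} (hx : x ∈ tensorGrade p q) :
    f.rTensor R x ∈ tensorGrade p' q :=
  tensorGrade_induction hx (by simp) (fun a ha r hr => tmul_mem_tensorGrade (hf a ha) hr)
    fun y z hy hz => by rw [map_add]; exact add_mem hy hz

lemma tensorBracket_mem_tensorGrade {br : V →ₗ[k] V →ₗ[k] V} {p p' p'' : Submodule k V}
    {q q' q'' : Submodule k R} (hbr : ∀ a ∈ p, ∀ b ∈ p', br a b ∈ p'')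
    (hq : ∀ r ∈ q, ∀ s ∈ q', r * s ∈ q'') {x y : V ⊗[k] R} (hx : x ∈ tensorGrade p q)
    (hy : y ∈ tensorGrade p' q') : tensorBracket br x y ∈ tensorGrade p'' q'' := by
  refine tensorGrade_induction hx (by simp) (fun a ha r hr => ?_)
    fun y z hy hz => by rw [map_add, LinearMap.add_apply]; exact add_mem hy hz
  refine tensorGrade_induction hy (by simp) (fun b hb s hs => ?_)
    fun y z hy hz => by rw [map_add]; exact add_mem hy hz
  rw [tensorBracket_tmul]
  exact tmul_mem_tensorGrade (hbr a ha b hb) (hq r hr s hs)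

def idealFiltration (k V : Type*) [Field k] [AddCommGroup V] [Module k V] {R : Type*} [CommRing R]
    [Algebra k R] (I : Ideal R) (s : ℕ) : Submodule k (V ⊗[k] R) :=
  tensorGrade ⊤ ((I ^ s).restrictScalars k)

lemma isFiltered_idealFiltration (I : Ideal R) (d η : V →ₗ[k] V) (br : V →ₗ[k] V →ₗ[k] V) :
    IsFiltered (idealFiltration k V I) (d.rTensor R) (tensorBracket br) (η.rTensor R) where
  zero_eq_top := by
    rw [eq_top_iff]
    rintro x -
    induction x using TensorProduct.induction_on with
    | zero => exact zero_mem _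
    | tmul a r => exact tmul_mem_tensorGrade Submodule.mem_top (by simp)
    | add y z hy hz => exact add_mem hy hz
  d_mem := rTensor_mem_tensorGrade fun _ _ => Submodule.mem_top
  η_mem := rTensor_mem_tensorGrade fun _ _ => Submodule.mem_top
  br_mem := tensorBracket_mem_tensorGrade (fun _ _ _ _ => Submodule.mem_top)
    fun _ hr _ hs => pow_add I _ _ ▸ Ideal.mul_mem_mul hr hs

lemma idealFiltration_eq_bot {I : Ideal R} {N : ℕ} (hN : I ^ N = ⊥) :
    idealFiltration k V I N = ⊥ := by
  refine eq_bot_iff.2 fun x hx => ?_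
  refine tensorGrade_induction hx (zero_mem _) (fun a _ r hr => ?_) fun _ _ => add_mem
  have hr0 : r ∈ (⊥ : Ideal R) := hN ▸ hr
  rw [Ideal.mem_bot.1 hr0, TensorProduct.tmul_zero]
  exact zero_mem _

variable (D : GradedDGLA k V)

lemma GradedDGLA.rTensor_d_rTensor_d (x : V ⊗[k] R) : D.d.rTensor R (D.d.rTensor R x) = 0 := by
  rw [← LinearMap.comp_apply, ← LinearMap.rTensor_comp, show D.d ∘ₗ D.d = 0 from
    LinearMap.ext D.d_sq, LinearMap.rTensor_zero, LinearMap.zero_apply]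

lemma GradedDGLA.isGraded_tensor {η : V →ₗ[k] V}
    (hη : ∀ (i : ℤ) (v : V), v ∈ D.grade i → η v ∈ D.grade (i - 1)) :
    IsGraded (fun i => tensorGrade (D.grade i) (⊤ : Submodule k R)) (D.d.rTensor R)
      (tensorBracket D.bracket) (η.rTensor R) where
  d_mem := rTensor_mem_tensorGrade (D.d_grade _)
  η_mem := rTensor_mem_tensorGrade (hη _)
  br_mem := tensorBracket_mem_tensorGrade (fun a ha b hb => D.bracket_grade _ _ a b ha hb)
    fun _ _ _ _ => Submodule.mem_top

lemma GradedDGLA.tensorBracket_antisymm (i j : ℤ) (x y : V ⊗[k] R)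
    (hx : x ∈ tensorGrade (D.grade i) ⊤) (hy : y ∈ tensorGrade (D.grade j) ⊤) :
    tensorBracket D.bracket x y = -((-1 : k) ^ (i * j) • tensorBracket D.bracket y x) := by
  refine tensorGrade_induction hx (by simp) (fun a ha r _ => ?_) fun y₁ y₂ h₁ h₂ => by
    simp only [map_add, LinearMap.add_apply, h₁, h₂, smul_add, neg_add]
  refine tensorGrade_induction hy (by simp) (fun b hb s _ => ?_) fun y₁ y₂ h₁ h₂ => by
    simp only [map_add, LinearMap.add_apply, h₁, h₂, smul_add, neg_add]
  rw [tensorBracket_tmul, tensorBracket_tmul, D.antisymm i j a b ha hb, mul_comm r s,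
    TensorProduct.neg_tmul, TensorProduct.smul_tmul']

lemma GradedDGLA.rTensor_leibniz (i : ℤ) (x y : V ⊗[k] R) (hx : x ∈ tensorGrade (D.grade i) ⊤) :
    D.d.rTensor R (tensorBracket D.bracket x y) = tensorBracket D.bracket (D.d.rTensor R x) y
      + (-1 : k) ^ i • tensorBracket D.bracket x (D.d.rTensor R y) := by
  refine tensorGrade_induction hx (by simp) (fun a ha r _ => ?_) fun y₁ y₂ h₁ h₂ => by
    simp only [map_add, LinearMap.add_apply, h₁, h₂, smul_add]; abel
  induction y using TensorProduct.induction_on with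
  | zero => simp
  | tmul b s =>
    simp only [tensorBracket_tmul, LinearMap.rTensor_tmul, D.leibniz i a b ha,
      TensorProduct.add_tmul, TensorProduct.smul_tmul']
  | add y₁ y₂ h₁ h₂ => simp only [map_add, h₁, h₂, smul_add]; abel

end Tensor

theorem statement3_general {k V : Type*} [Field k] [CharZero k] [AddCommGroup V] [Module k V]
    (D : GradedDGLA k V) (η : V →ₗ[k] V)
    (hη : ∀ (i : ℤ) (v : V), v ∈ D.grade i → η v ∈ D.grade (i - 1))
    (R : Type*) [CommRing R] [Algebra k R] [IsLocalRing R]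
    (N : ℕ) (hN : IsLocalRing.maximalIdeal R ^ N = ⊥)
    (Γ : V ⊗[k] R) (hΓ : Γ ∈ tensorGrade (D.grade 1) (maxIdealSub k R))
    (hMC : (∑ n ∈ Finset.Icc 1 N, mcCoeff k n •
        muRec (LinearMap.rTensor R D.d) (tensorBracket D.bracket) (LinearMap.rTensor R η)
          n (fun _ => (1 : ℤ)) (fun _ => Γ)) = 0)
    (j : ℤ) (w : V ⊗[k] R) (hw : w ∈ tensorGrade (D.grade j) (maxIdealSub k R)) :
    deformedDiff (LinearMap.rTensor R D.d) (tensorBracket D.bracket) (LinearMap.rTensor R η)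
        Γ N (j + 1)
        (deformedDiff (LinearMap.rTensor R D.d) (tensorBracket D.bracket)
          (LinearMap.rTensor R η) Γ N j w) = 0 := by
  have hΓm : Γ ∈ idealFiltration k V (IsLocalRing.maximalIdeal R) 1 :=
    tensorGrade_mono le_top (by rw [pow_one]; rfl) hΓ
  exact deformedDiff_deformedDiff_eq_zero (D.isGraded_tensor hη)
    (isFiltered_idealFiltration _ _ _ _) D.rTensor_d_rTensor_d D.tensorBracket_antisymm
    D.rTensor_leibniz
    (tensorGrade_mono le_rfl le_top hΓ) hΓm (idealFiltration_eq_bot hN) hMC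
    (tensorGrade_mono le_rfl le_top hw)

theorem statement3 {k V : Type*} [Field k] [CharZero k] [AddCommGroup V] [Module k V]
    (D : GradedDGLA k V) (η : V →ₗ[k] V)
    (hη : ∀ (i : ℤ) (v : V), v ∈ D.grade i → η v ∈ D.grade (i - 1))
    (R : Type*) [CommRing R] [Algebra k R] [IsLocalRing R] [IsArtinianRing R]
    (N : ℕ) (hN : IsLocalRing.maximalIdeal R ^ N = ⊥)
    (Γ : V ⊗[k] R) (hΓ : Γ ∈ tensorGrade (D.grade 1) (maxIdealSub k R))
    (hMC : (∑ n ∈ Finset.Icc 1 N, mcCoeff k n •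
        muRec (LinearMap.rTensor R D.d) (tensorBracket D.bracket) (LinearMap.rTensor R η)
          n (fun _ => (1 : ℤ)) (fun _ => Γ)) = 0)
    (j : ℤ) (w : V ⊗[k] R) (hw : w ∈ tensorGrade (D.grade j) (maxIdealSub k R)) :
    deformedDiff (LinearMap.rTensor R D.d) (tensorBracket D.bracket) (LinearMap.rTensor R η)
        Γ N (j + 1)
        (deformedDiff (LinearMap.rTensor R D.d) (tensorBracket D.bracket)
          (LinearMap.rTensor R η) Γ N j w) = 0 :=
  statement3_general D η hη R N hN Γ hΓ hMC j w hw
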